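/- arXiv:1809.00967 — 10 statements merged into one kernel-verified Lean document; each statement's English description precedes it below -/
import Mathlib

section
/- Let Z be a real Hilbert space and let (u_n) be a sequence in Z converging weakly to u ∈ Z. Then for every v ∈ Z with v ≠ u, one has liminf_{n→∞} ‖u_n − v‖ > liminf_{n→∞} ‖u_n − u‖. -/
/-!
Writing `u n - v = (u n - u) + (u - v)`,
`‖u n - v‖² = ‖u n - u‖² + 2 ⟪u n - u, u - v⟫ + ‖u - v‖²`, and the cross term tends to `0` by weak
convergence, so `liminf ‖u n - v‖² = liminf ‖u n - u‖² + ‖u - v‖²`; taking square roots gives the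
strict inequality as soon as `v ≠ u`. By uniform boundedness a weakly convergent sequence is bounded,
so these real `liminf`s are not junk values.
-/

open Filter Topology

/-- Weak convergence of a sequence in an inner product space. -/
def WeakConv {X : Type*} [NormedAddCommGroup X] [InnerProductSpace ℝ X]
    (u : ℕ → X) (l : X) : Prop :=
  ∀ v : X, Tendsto (fun n => (inner ℝ (u n) v : ℝ)) atTop (𝓝 (inner ℝ l v))

section Liminf

variable {ι : Type*} {f : Filter ι}

theorem Real.liminf_add_of_tendsto [NeBot f] {g h : ι → ℝ} {c : ℝ}
    (hg_below : IsBoundedUnder (· ≥ ·) f g) (hg_cobdd : IsCoboundedUnder (· ≥ ·) f g)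
    (hh : Tendsto h f (𝓝 c)) :
    liminf (fun i => g i + h i) f = liminf g f + c := by
  have hswap : (fun i => g i + h i) = h + g := funext fun i => add_comm _ _
  rw [hswap]
  apply le_antisymm
  · calc liminf (h + g) f ≤ limsup h f + liminf g f :=
          liminf_add_le hh.isBoundedUnder_ge hh.isBoundedUnder_le hg_below hg_cobdd
      _ = liminf g f + c := by rw [hh.limsup_eq, add_comm]
  · calc liminf g f + c = liminf h f + liminf g f := by rw [hh.liminf_eq, add_comm]
      _ ≤ liminf (h + g) f :=
          le_liminf_add hh.isBoundedUnder_ge hh.isBoundedUnder_le hg_below hg_cobdd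

theorem Real.isBoundedUnder_le_sq {g : ι → ℝ} (hg_nonneg : ∀ i, 0 ≤ g i)
    (hg_above : IsBoundedUnder (· ≤ ·) f g) :
    IsBoundedUnder (· ≤ ·) f (fun i => g i ^ 2) := by
  obtain ⟨C, hC⟩ := hg_above.eventually_le
  exact isBoundedUnder_of_eventually_le (a := C ^ 2) <| hC.mono fun i hi => by
    gcongr
    exact hg_nonneg i

theorem Real.liminf_eq_sqrt_liminf_sq [NeBot f] {g : ι → ℝ} (hg_nonneg : ∀ i, 0 ≤ g i)
    (hg_above : IsBoundedUnder (· ≤ ·) f g) :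
    liminf g f = √(liminf (fun i => g i ^ 2) f) := by
  have hsq_above := Real.isBoundedUnder_le_sq hg_nonneg hg_above
  have hsq_nonneg : ∀ i, 0 ≤ g i ^ 2 := fun i => sq_nonneg _
  calc liminf g f = liminf (Real.sqrt ∘ fun i => g i ^ 2) f := by
        simp only [Function.comp_def, Real.sqrt_sq (hg_nonneg _)]
    _ = √(liminf (fun i => g i ^ 2) f) :=
        (Real.sqrt_monotone.map_liminf_of_continuousAt _
          Real.continuous_sqrt.continuousAt hsq_above.isCoboundedUnder_ge
          (isBoundedUnder_of ⟨0, hsq_nonneg⟩)).symm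

end Liminf

namespace WeakConv

variable {Z : Type*} [NormedAddCommGroup Z] [InnerProductSpace ℝ Z] {u : ℕ → Z} {l : Z}

theorem exists_norm_le [CompleteSpace Z] (hu : WeakConv u l) : ∃ C, ∀ n, ‖u n‖ ≤ C := by
  have hpointwise : ∀ x : Z, ∃ C, ∀ n, ‖InnerProductSpace.toDualMap ℝ Z (u n) x‖ ≤ C := fun x => by
    obtain ⟨C, hC⟩ := (hu x).norm.bddAbove_range
    exact ⟨C, fun n => by simpa using hC (Set.mem_range_self n)⟩
  obtain ⟨C, hC⟩ := banach_steinhaus hpointwise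
  exact ⟨C, fun n => by simpa using hC n⟩

theorem isBoundedUnder_norm_sub [CompleteSpace Z] (hu : WeakConv u l) (w : Z) :
    IsBoundedUnder (· ≤ ·) atTop (fun n => ‖u n - w‖) := by
  obtain ⟨C, hC⟩ := hu.exists_norm_le
  exact isBoundedUnder_of ⟨C + ‖w‖, fun n => (norm_sub_le _ _).trans (by linarith [hC n])⟩

theorem isBoundedUnder_norm_sub_sq [CompleteSpace Z] (hu : WeakConv u l) (w : Z) :
    IsBoundedUnder (· ≤ ·) atTop (fun n => ‖u n - w‖ ^ 2) :=
  Real.isBoundedUnder_le_sq (fun _ => norm_nonneg _) (hu.isBoundedUnder_norm_sub w)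

theorem tendsto_inner_sub (hu : WeakConv u l) (w : Z) :
    Tendsto (fun n => inner ℝ (u n - l) w) atTop (𝓝 0) := by
  simpa only [inner_sub_left, sub_self] using (hu w).sub_const (inner ℝ l w)

theorem liminf_norm_sub_sq [CompleteSpace Z] (hu : WeakConv u l) (v : Z) :
    liminf (fun n => ‖u n - v‖ ^ 2) atTop = liminf (fun n => ‖u n - l‖ ^ 2) atTop + ‖l - v‖ ^ 2 := by
  have hexpand : ∀ n, ‖u n - v‖ ^ 2 =
      ‖u n - l‖ ^ 2 + (2 * inner ℝ (u n - l) (l - v) + ‖l - v‖ ^ 2) := fun n => by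
    rw [← add_assoc, ← norm_add_sq_real, sub_add_sub_cancel]
  have hcross : Tendsto (fun n => 2 * inner ℝ (u n - l) (l - v) + ‖l - v‖ ^ 2) atTop
      (𝓝 (‖l - v‖ ^ 2)) := by
    simpa using ((hu.tendsto_inner_sub (l - v)).const_mul 2).add_const (‖l - v‖ ^ 2)
  simp only [hexpand]
  exact Real.liminf_add_of_tendsto (isBoundedUnder_of ⟨0, fun n => sq_nonneg _⟩)
    (hu.isBoundedUnder_norm_sub_sq l).isCoboundedUnder_ge hcross

end WeakConv

/-- Opial's Lemma: if `u_n ⇀ u` weakly in a real Hilbert space, then for every `v ≠ u`,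
`liminf ‖u_n - v‖ > liminf ‖u_n - u‖`. -/
theorem opial_lemma {Z : Type*} [NormedAddCommGroup Z] [InnerProductSpace ℝ Z]
    [CompleteSpace Z] (u : ℕ → Z) (ulim : Z) (hu : WeakConv u ulim)
    (v : Z) (hv : v ≠ ulim) :
    liminf (fun n => ‖u n - ulim‖) atTop < liminf (fun n => ‖u n - v‖) atTop := by
  rw [Real.liminf_eq_sqrt_liminf_sq (fun n => norm_nonneg _) (hu.isBoundedUnder_norm_sub ulim),
    Real.liminf_eq_sqrt_liminf_sq (fun n => norm_nonneg _) (hu.isBoundedUnder_norm_sub v),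
    hu.liminf_norm_sub_sq v]
  have hliminf_nonneg : 0 ≤ liminf (fun n => ‖u n - ulim‖ ^ 2) atTop :=
    le_liminf_of_le (hu.isBoundedUnder_norm_sub_sq ulim).isCoboundedUnder_ge
      (.of_forall fun n => sq_nonneg _)
  have hdist_pos : 0 < ‖ulim - v‖ ^ 2 := pow_pos (norm_pos_iff.mpr (sub_ne_zero.mpr hv.symm)) 2
  exact Real.sqrt_lt_sqrt hliminf_nonneg (lt_add_of_pos_right _ hdist_pos)
end

section
/- Let T₁ and T₂ be maximal monotone operators on a real Hilbert space X. Suppose (z_{k,1}, v_{k,1}) ∈ T₁ and (z_{k,2}, v_{k,2}) ∈ T₂ for k = 1, 2, …, and that z_{k,1} − z_{k,2} → 0 strongly, v_{k,1} + v_{k,2} → 0 strongly, z_{k,1} ⇀ z weakly, and v_{k,1} ⇀ v weakly as k → ∞. Then (z, v) ∈ T₁ and (z, −v) ∈ T₂. -/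
open Filter Topology

/-- A set-valued operator `T` on `X` (identified with its graph) is monotone. -/
def IsMonotoneOp {X : Type*} [NormedAddCommGroup X] [InnerProductSpace ℝ X]
    (T : Set (X × X)) : Prop :=
  ∀ p ∈ T, ∀ q ∈ T, (0 : ℝ) ≤ inner ℝ (p.1 - q.1) (p.2 - q.2)

/-- `T` is maximal monotone: monotone and maximal w.r.t. inclusion among monotone operators. -/
def IsMaxMonotone {X : Type*} [NormedAddCommGroup X] [InnerProductSpace ℝ X]
    (T : Set (X × X)) : Prop :=
  IsMonotoneOp T ∧ ∀ S : Set (X × X), IsMonotoneOp S → T ⊆ S → S = T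

/-- The extended solution set `S_e(A,B) = {(z,w) : w ∈ B(z), -w ∈ A(z)}`. -/
def Se {X : Type*} [NormedAddCommGroup X] [InnerProductSpace ℝ X]
    (A B : Set (X × X)) : Set (X × X) :=
  {p | (p.1, p.2) ∈ B ∧ (p.1, -p.2) ∈ A}

/-- The sequences `(y n, a n, x n, b n)` (for `n ≥ 1`) are generated by the
Douglas–Rachford method with stepsize `lam` from initial points `x 0`, `b 0`:
`a n ∈ A (y n)`, `lam • a n + y n = x (n-1) - lam • b (n-1)`,
`b n ∈ B (x n)`, `lam • b n + x n = y n + lam • b (n-1)`. -/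
def IsDR {X : Type*} [NormedAddCommGroup X] [InnerProductSpace ℝ X]
    (A B : Set (X × X)) (lam : ℝ) (y a x b : ℕ → X) : Prop :=
  ∀ n, 1 ≤ n →
    (y n, a n) ∈ A ∧ lam • a n + y n = x (n - 1) - lam • b (n - 1) ∧
    (x n, b n) ∈ B ∧ lam • b n + x n = y n + lam • b (n - 1)

/-!
Pair each `(z_{k,i}, v_{k,i})` with an arbitrary point of `Tᵢ` and add the two monotonicity
inequalities. After expanding, the only terms not linear in the sequences are
`⟪z_{k,1}, v_{k,1}⟫ + ⟪z_{k,2}, v_{k,2}⟫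
  = ⟪v_{k,1} + v_{k,2}, z_{k,1}⟫ - ⟪z_{k,1} - z_{k,2}, v_{k,2}⟫`,
products of a null sequence with a weakly convergent, hence (Banach–Steinhaus) bounded, one;
so they tend to `0`. Passing to the limit, `(z, v)` and `(z, -v)` satisfy the sum of the two
monotonicity inequalities against all of `T₁ × T₂`, and maximality of each `Tᵢ` splits it into
the two separate inequalities.
-/

open scoped RealInnerProductSpace

namespace IsMaxMonotone

variable {X : Type*} [NormedAddCommGroup X] [InnerProductSpace ℝ X] {T T₁ T₂ : Set (X × X)}

lemma mem_of_forall_inner_nonneg (hT : IsMaxMonotone T) {p : X × X}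
    (h : ∀ q ∈ T, 0 ≤ ⟪p.1 - q.1, p.2 - q.2⟫) : p ∈ T := by
  have hmono : IsMonotoneOp (insert p T) := by
    rintro a (rfl | ha) b (rfl | hb)
    · simp
    · exact h b hb
    · simpa only [← neg_sub a.1, ← neg_sub a.2, inner_neg_neg] using h a ha
    · exact hT.1 a ha b hb
  rw [← hT.2 _ hmono (Set.subset_insert p T)]
  exact Set.mem_insert p T

lemma exists_inner_nonpos (hT : IsMaxMonotone T) (p : X × X) :
    ∃ q ∈ T, ⟪p.1 - q.1, p.2 - q.2⟫ ≤ 0 := by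
  by_contra! h
  simpa using h p (hT.mem_of_forall_inner_nonneg fun q hq => (h q hq).le)

lemma mem_and_mem_of_forall_inner_add_inner_nonneg (hT₁ : IsMaxMonotone T₁)
    (hT₂ : IsMaxMonotone T₂) {p₁ p₂ : X × X}
    (h : ∀ q₁ ∈ T₁, ∀ q₂ ∈ T₂, 0 ≤ ⟪p₁.1 - q₁.1, p₁.2 - q₁.2⟫ + ⟪p₂.1 - q₂.1, p₂.2 - q₂.2⟫) :
    p₁ ∈ T₁ ∧ p₂ ∈ T₂ := by
  constructor
  · refine hT₁.mem_of_forall_inner_nonneg fun q₁ hq₁ => ?_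
    obtain ⟨q₂, hq₂, hle⟩ := hT₂.exists_inner_nonpos p₂
    linarith [h q₁ hq₁ q₂ hq₂]
  · refine hT₂.mem_of_forall_inner_nonneg fun q₂ hq₂ => ?_
    obtain ⟨q₁, hq₁, hle⟩ := hT₁.exists_inner_nonpos p₁
    linarith [h q₁ hq₁ q₂ hq₂]

end IsMaxMonotone

namespace WeakConv

variable {X : Type*} [NormedAddCommGroup X] [InnerProductSpace ℝ X] {u w : ℕ → X} {a b : X}

lemma isBoundedUnder [CompleteSpace X] (h : WeakConv u a) :
    IsBoundedUnder (· ≤ ·) atTop (norm ∘ u) := by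
  obtain ⟨C, hC⟩ := banach_steinhaus (g := fun k => innerSL ℝ (u k)) fun y => by
    obtain ⟨C, hC⟩ := (h y).norm.bddAbove_range
    exact ⟨C, fun k => hC ⟨k, rfl⟩⟩
  exact isBoundedUnder_of ⟨C, fun k => (innerSL_apply_norm ℝ (u k)).symm.trans_le (hC k)⟩

lemma add_tendsto (hu : WeakConv u a) (hw : Tendsto w atTop (𝓝 b)) :
    WeakConv (fun k => u k + w k) (a + b) := fun y => by
  simpa only [inner_add_left] using (hu y).add (hw.inner tendsto_const_nhds)

lemma neg (hu : WeakConv u a) : WeakConv (fun k => -u k) (-a) := fun y => by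
  simpa only [inner_neg_left] using (hu y).neg

/-- Subtracting `⟪u k, w k⟫` removes the only term that weak convergence does not control. -/
lemma tendsto_inner_sub_sub_sub_inner (hu : WeakConv u a) (hw : WeakConv w b) (x y : X) :
    Tendsto (fun k => ⟪u k - x, w k - y⟫ - ⟪u k, w k⟫) atTop (𝓝 (⟪a - x, b - y⟫ - ⟪a, b⟫)) := by
  convert ((hu y).add (hw x)).neg.add_const ⟪x, y⟫ using 2 with k
  · simp only [inner_sub_left, inner_sub_right, real_inner_comm x (w k)]
    ring
  · simp only [inner_sub_left, inner_sub_right, real_inner_comm x b]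
    ring

end WeakConv

section

variable {X : Type*} [NormedAddCommGroup X] [InnerProductSpace ℝ X]

lemma tendsto_inner_add_inner_zero {z₁ v₁ z₂ v₂ : ℕ → X}
    (hz₁ : IsBoundedUnder (· ≤ ·) atTop (norm ∘ z₁))
    (hv₂ : IsBoundedUnder (· ≤ ·) atTop (norm ∘ v₂))
    (hz : Tendsto (fun k => z₁ k - z₂ k) atTop (𝓝 0))
    (hv : Tendsto (fun k => v₁ k + v₂ k) atTop (𝓝 0)) :
    Tendsto (fun k => ⟪z₁ k, v₁ k⟫ + ⟪z₂ k, v₂ k⟫) atTop (𝓝 0) := by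
  have h₁ := hv.op_zero_isBoundedUnder_le hz₁ (inner ℝ) norm_inner_le_norm
  have h₂ := hz.op_zero_isBoundedUnder_le hv₂ (inner ℝ) norm_inner_le_norm
  convert h₁.sub h₂ using 2 with k
  · simp only [inner_add_left, inner_sub_left, real_inner_comm (z₁ k) (v₁ k),
      real_inner_comm (z₁ k) (v₂ k)]
    ring
  · simp

lemma inner_add_inner_nonneg_of_weak_strong_limit [CompleteSpace X] {T₁ T₂ : Set (X × X)}
    (hT₁ : IsMonotoneOp T₁) (hT₂ : IsMonotoneOp T₂) {z₁ v₁ z₂ v₂ : ℕ → X}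
    (hm₁ : ∀ k, (z₁ k, v₁ k) ∈ T₁) (hm₂ : ∀ k, (z₂ k, v₂ k) ∈ T₂)
    (hz : Tendsto (fun k => z₁ k - z₂ k) atTop (𝓝 0))
    (hv : Tendsto (fun k => v₁ k + v₂ k) atTop (𝓝 0))
    {z v : X} (hzw : WeakConv z₁ z) (hvw : WeakConv v₁ v) :
    ∀ q₁ ∈ T₁, ∀ q₂ ∈ T₂, 0 ≤ ⟪z - q₁.1, v - q₁.2⟫ + ⟪z - q₂.1, -v - q₂.2⟫ := by
  intro q₁ hq₁ q₂ hq₂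
  have hz₂ : WeakConv z₂ z := by simpa using hzw.add_tendsto hz.neg
  have hv₂ : WeakConv v₂ (-v) := by simpa using hvw.neg.add_tendsto hv
  have hlim := ((hzw.tendsto_inner_sub_sub_sub_inner hvw q₁.1 q₁.2).add
    (hz₂.tendsto_inner_sub_sub_sub_inner hv₂ q₂.1 q₂.2)).add
    (tendsto_inner_add_inner_zero hzw.isBoundedUnder hv₂.isBoundedUnder hz hv)
  refine ge_of_tendsto' (by simpa using hlim) fun k => ?_
  have h₁ := hT₁ _ (hm₁ k) q₁ hq₁
  have h₂ := hT₂ _ (hm₂ k) q₂ hq₂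
  dsimp only at h₁ h₂ ⊢
  linarith

end

/-- Bauschke's lemma: graphs of maximal monotone operators are closed under this
mixed weak/strong convergence. -/
theorem weak_strong_graph_closed {X : Type*} [NormedAddCommGroup X]
    [InnerProductSpace ℝ X] [CompleteSpace X]
    (T₁ T₂ : Set (X × X)) (hT₁ : IsMaxMonotone T₁) (hT₂ : IsMaxMonotone T₂)
    (z₁ v₁ z₂ v₂ : ℕ → X)
    (hm₁ : ∀ k, (z₁ k, v₁ k) ∈ T₁) (hm₂ : ∀ k, (z₂ k, v₂ k) ∈ T₂)
    (hz : Tendsto (fun k => z₁ k - z₂ k) atTop (𝓝 0))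
    (hv : Tendsto (fun k => v₁ k + v₂ k) atTop (𝓝 0))
    (z v : X) (hzw : WeakConv z₁ z) (hvw : WeakConv v₁ v) :
    (z, v) ∈ T₁ ∧ (z, -v) ∈ T₂ :=
  IsMaxMonotone.mem_and_mem_of_forall_inner_add_inner_nonneg hT₁ hT₂
    (inner_add_inner_nonneg_of_weak_strong_limit hT₁.1 hT₂.1 hm₁ hm₂ hz hv hzw hvw)
end

section
/- Let A, B be maximal monotone operators on a real Hilbert space X, let λ > 0, and let (y_n, a_n, x_n, b_n) be sequences generated by the Douglas–Rachford method from initial points x₀, b₀ ∈ X. If there exists z ∈ X with 0 ∈ A(z) + B(z), then ‖x_n − y_n‖ → 0 and ‖a_n + b_n‖ → 0 as n → ∞. -/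
open Filter Topology

/-!
With `(z, v) ∈ Se A B`, the energy `‖x n - z‖² + ‖λ (b n - v)‖²` of the Douglas–Rachford
iterates drops at each step by at least `‖x n - y n‖² + ‖x (n-1) - x n‖²`: monotonicity of `A`
and of `B` (used twice) gives three nonnegative inner products, which combine into this Fejér
inequality. Hence these decrements tend to zero, and `λ (a n + b n) = x (n-1) - x n`.
-/

lemma norm_sq_add_norm_sq_le_of_inner_nonneg {E : Type*} [NormedAddCommGroup E]
    [InnerProductSpace ℝ E] {q g d e : E}
    (hqe : 0 ≤ inner ℝ q e) (hdg : 0 ≤ inner ℝ d g) (h : 0 ≤ inner ℝ (q - d) (g - e)) :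
    ‖d‖ ^ 2 + ‖g‖ ^ 2 + (‖q‖ ^ 2 + ‖e‖ ^ 2) ≤ ‖q + g‖ ^ 2 + ‖e + d‖ ^ 2 := by
  rw [norm_add_sq_real, norm_add_sq_real, real_inner_comm d e]
  rw [inner_sub_left, inner_sub_right, inner_sub_right] at h
  linarith

lemma tendsto_zero_of_add_le_of_nonneg {c ψ : ℕ → ℝ} (hc : ∀ n, 0 ≤ c n) (hψ : ∀ n, 0 ≤ ψ n)
    (h : ∀ n, c n + ψ (n + 1) ≤ ψ n) : Tendsto c atTop (𝓝 0) := by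
  have hanti : Antitone ψ := antitone_nat_of_succ_le fun n => by linarith [hc n, h n]
  have hlim := tendsto_atTop_ciInf hanti ⟨0, by rintro _ ⟨n, rfl⟩; exact hψ n⟩
  have hdrop : Tendsto (fun n => ψ n - ψ (n + 1)) atTop (𝓝 0) := by
    simpa using hlim.sub (hlim.comp (tendsto_add_atTop_nat 1))
  exact squeeze_zero hc (fun n => by linarith [h n]) hdrop

lemma tendsto_norm_zero_of_sq_le {ι E : Type*} [SeminormedAddCommGroup E] {l : Filter ι}
    {u : ι → E} {c : ι → ℝ} (hc : Tendsto c l (𝓝 0)) (h : ∀ i, ‖u i‖ ^ 2 ≤ c i) :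
    Tendsto (fun i => ‖u i‖) l (𝓝 0) := by
  have hsqrt : Tendsto (fun i => √(c i)) l (𝓝 0) := by simpa using hc.sqrt
  exact squeeze_zero (fun _ => norm_nonneg _) (fun i => Real.le_sqrt_of_sq_le (h i)) hsqrt

namespace IsDR

variable {X : Type*} [NormedAddCommGroup X] [InnerProductSpace ℝ X] {A B : Set (X × X)}
  {lam : ℝ} {y a x b : ℕ → X}

lemma succ (hDR : IsDR A B lam y a x b) (n : ℕ) :
    (y (n + 1), a (n + 1)) ∈ A ∧ lam • a (n + 1) + y (n + 1) = x n - lam • b n ∧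
    (x (n + 1), b (n + 1)) ∈ B ∧ lam • b (n + 1) + x (n + 1) = y (n + 1) + lam • b n :=
  hDR (n + 1) n.succ_pos

lemma smul_add_eq_sub (hDR : IsDR A B lam y a x b) (n : ℕ) :
    lam • (a (n + 1) + b (n + 1)) = x n - x (n + 1) := by
  obtain ⟨-, hy, -, hx⟩ := hDR.succ n
  linear_combination (norm := module) hy + hx

lemma norm_add_eq_div (hDR : IsDR A B lam y a x b) (hlam : 0 < lam) (n : ℕ) :
    ‖a (n + 1) + b (n + 1)‖ = ‖x n - x (n + 1)‖ / lam := by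
  rw [← hDR.smul_add_eq_sub, norm_smul, Real.norm_of_nonneg hlam.le,
    mul_div_cancel_left₀ _ hlam.ne']

lemma fejer (hDR : IsDR A B lam y a x b) (hA : IsMonotoneOp A) (hB : IsMonotoneOp B)
    (hlam : 0 ≤ lam) {z v : X} (hzv : (z, v) ∈ Se A B) (n : ℕ) :
    ‖x (n + 2) - y (n + 2)‖ ^ 2 + ‖x (n + 1) - x (n + 2)‖ ^ 2
        + (‖x (n + 2) - z‖ ^ 2 + ‖lam • (b (n + 2) - v)‖ ^ 2)
      ≤ ‖x (n + 1) - z‖ ^ 2 + ‖lam • (b (n + 1) - v)‖ ^ 2 := by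
  obtain ⟨hAy, hy, hBx, hx⟩ := hDR.succ (n + 1)
  have hBx' := (hDR.succ n).2.2.1
  have hB_sol : 0 ≤ inner ℝ (x (n + 2) - z) (lam • (b (n + 2) - v)) := by
    rw [real_inner_smul_right]
    exact mul_nonneg hlam (hB _ hBx _ hzv.1)
  have hB_step : 0 ≤ inner ℝ (x (n + 2) - y (n + 2)) (x (n + 1) - x (n + 2)) := by
    have hd : x (n + 2) - y (n + 2) = lam • (b (n + 1) - b (n + 2)) := by
      linear_combination (norm := module) hx
    rw [hd, real_inner_smul_left, real_inner_comm, ← inner_neg_neg, neg_sub, neg_sub]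
    exact mul_nonneg hlam (hB _ hBx _ hBx')
  have hA_sol : 0 ≤ inner ℝ ((x (n + 2) - z) - (x (n + 2) - y (n + 2)))
      ((x (n + 1) - x (n + 2)) - lam • (b (n + 2) - v)) := by
    have hq : (x (n + 2) - z) - (x (n + 2) - y (n + 2)) = y (n + 2) - z := by abel
    have hg : (x (n + 1) - x (n + 2)) - lam • (b (n + 2) - v) = lam • (a (n + 2) - -v) := by
      linear_combination (norm := module) -hy - hx
    rw [hq, hg, real_inner_smul_right]
    exact mul_nonneg hlam (hA _ hAy _ hzv.2)
  have hqg : (x (n + 2) - z) + (x (n + 1) - x (n + 2)) = x (n + 1) - z := by abel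
  have hed : lam • (b (n + 2) - v) + (x (n + 2) - y (n + 2)) = lam • (b (n + 1) - v) := by
    linear_combination (norm := module) hx
  simpa only [hqg, hed] using norm_sq_add_norm_sq_le_of_inner_nonneg hB_sol hB_step hA_sol

end IsDR

theorem dr_item2_general {X : Type*} [NormedAddCommGroup X] [InnerProductSpace ℝ X]
    (A B : Set (X × X))
    (hA : IsMaxMonotone A) (hB : IsMaxMonotone B)
    (lam : ℝ) (hlam : 0 < lam) (y a x b : ℕ → X) (hDR : IsDR A B lam y a x b)
    (hsol : ∃ z u v : X, (z, u) ∈ A ∧ (z, v) ∈ B ∧ u + v = 0) :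
    Tendsto (fun n => ‖x n - y n‖) atTop (𝓝 0) ∧
    Tendsto (fun n => ‖a n + b n‖) atTop (𝓝 0) := by
  obtain ⟨z, u, v, hzu, hzv, huv⟩ := hsol
  have hSe : (z, v) ∈ Se A B := ⟨hzv, by rwa [← eq_neg_of_add_eq_zero_left huv]⟩
  have hdrop : Tendsto (fun n => ‖x (n + 2) - y (n + 2)‖ ^ 2 + ‖x (n + 1) - x (n + 2)‖ ^ 2)
      atTop (𝓝 0) :=
    tendsto_zero_of_add_le_of_nonneg
      (ψ := fun n => ‖x (n + 1) - z‖ ^ 2 + ‖lam • (b (n + 1) - v)‖ ^ 2)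
      (fun _ => by positivity) (fun _ => by positivity) (hDR.fejer hA.1 hB.1 hlam.le hSe)
  have hxy := tendsto_norm_zero_of_sq_le hdrop fun n =>
    le_add_of_nonneg_right (sq_nonneg ‖x (n + 1) - x (n + 2)‖)
  have hxx := tendsto_norm_zero_of_sq_le hdrop fun n =>
    le_add_of_nonneg_left (sq_nonneg ‖x (n + 2) - y (n + 2)‖)
  refine ⟨(tendsto_add_atTop_iff_nat 2).1 hxy, (tendsto_add_atTop_iff_nat 2).1 ?_⟩
  simpa only [hDR.norm_add_eq_div hlam, zero_div] using hxx.div_const lam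

/-- If the monotone inclusion `0 ∈ A(z) + B(z)` has a solution, then in the
Douglas–Rachford method `‖x_n - y_n‖ → 0` and `‖a_n + b_n‖ → 0`. -/
theorem dr_item2 {X : Type*} [NormedAddCommGroup X] [InnerProductSpace ℝ X]
    [CompleteSpace X] (A B : Set (X × X))
    (hA : IsMaxMonotone A) (hB : IsMaxMonotone B)
    (lam : ℝ) (hlam : 0 < lam) (y a x b : ℕ → X) (hDR : IsDR A B lam y a x b)
    (hsol : ∃ z u v : X, (z, u) ∈ A ∧ (z, v) ∈ B ∧ u + v = 0) :
    Tendsto (fun n => ‖x n - y n‖) atTop (𝓝 0) ∧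
    Tendsto (fun n => ‖a n + b n‖) atTop (𝓝 0) :=
  dr_item2_general A B hA hB lam hlam y a x b hDR hsol
end

section
/- Let A, B be maximal monotone operators on a real Hilbert space X, let λ > 0, and let (y_n, a_n, x_n, b_n) be sequences generated by the Douglas–Rachford method from initial points x₀, b₀ ∈ X. If there exists z ∈ X with 0 ∈ A(z) + B(z), then ‖x_n − x_{n−1}‖ → 0 and ‖b_n − b_{n−1}‖ → 0 as n → ∞. -/
open Filter Topology

/-!
With `(z, w)` in the extended solution set (`w ∈ B z`, `-w ∈ A z`), the Douglas–Rachford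
iterates are Fejér monotone for the energy `‖x n - z‖² + ‖λ (b n - w)‖²`: monotonicity of `A`
at `(y n, a n)`, of `B` at `(x n, b n)` and of `B` between consecutive iterates show that each
step decreases the energy by at least `‖x n - x (n-1)‖² + ‖λ (b n - b (n-1))‖²`.
Telescoping makes these decrements summable, so they tend to zero.
-/

section Hilbert

variable {X : Type*} [NormedAddCommGroup X] [InnerProductSpace ℝ X]

-- The right side minus the left side is exactly twice the sum of the three inner products.
lemma norm_sq_add_norm_sq_le_of_inner_nonneg_s4 (P P' Q Q' : X)
    (h1 : 0 ≤ inner ℝ (P + Q - Q') (P' - P - Q))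
    (h2 : 0 ≤ inner ℝ P Q)
    (h3 : 0 ≤ inner ℝ (P - P') (Q - Q')) :
    ‖P - P'‖ ^ 2 + ‖Q - Q'‖ ^ 2 + (‖P‖ ^ 2 + ‖Q‖ ^ 2) ≤ ‖P'‖ ^ 2 + ‖Q'‖ ^ 2 := by
  simp only [inner_sub_left, inner_sub_right, inner_add_left,
    real_inner_self_eq_norm_sq] at h1 h3
  rw [norm_sub_sq_real P P', norm_sub_sq_real Q Q']
  linarith [real_inner_comm P Q, real_inner_comm P' Q, real_inner_comm P Q',
    real_inner_comm P' Q', real_inner_comm Q Q']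

lemma IsMonotoneOp.inner_smul_nonneg {T : Set (X × X)} (hT : IsMonotoneOp T) {p q : X × X}
    (hp : p ∈ T) (hq : q ∈ T) {lam : ℝ} (hlam : 0 ≤ lam) :
    0 ≤ inner ℝ (p.1 - q.1) (lam • (p.2 - q.2)) := by
  rw [real_inner_smul_right]
  exact mul_nonneg hlam (hT p hp q hq)

lemma IsDR.fejer_s4 {A B : Set (X × X)} (hA : IsMonotoneOp A) (hB : IsMonotoneOp B)
    {lam : ℝ} (hlam : 0 ≤ lam) {y a x b : ℕ → X} (hDR : IsDR A B lam y a x b)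
    {z w : X} (hzw : (z, w) ∈ Se A B) {n : ℕ} (hn : 1 ≤ n) :
    ‖x (n + 1) - x n‖ ^ 2 + ‖lam • (b (n + 1) - b n)‖ ^ 2 +
        (‖x (n + 1) - z‖ ^ 2 + ‖lam • (b (n + 1) - w)‖ ^ 2) ≤
      ‖x n - z‖ ^ 2 + ‖lam • (b n - w)‖ ^ 2 := by
  obtain ⟨hyA, hstepA, hxB, hstepB⟩ := hDR (n + 1) (by omega)
  obtain ⟨-, -, hxB', -⟩ := hDR n hn
  simp only [Nat.add_sub_cancel] at hstepA hstepB
  have hdx : x (n + 1) - x n = (x (n + 1) - z) - (x n - z) :=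
    (sub_sub_sub_cancel_right _ _ _).symm
  have hdb : lam • (b (n + 1) - b n) = lam • (b (n + 1) - w) - lam • (b n - w) := by
    rw [← smul_sub, sub_sub_sub_cancel_right]
  have hy : y (n + 1) - z = (x (n + 1) - z) + lam • (b (n + 1) - w) - lam • (b n - w) := by
    linear_combination (norm := module) -hstepB
  have ha : lam • (a (n + 1) - -w) =
      (x n - z) - (x (n + 1) - z) - lam • (b (n + 1) - w) := by
    linear_combination (norm := module) hstepA + hstepB
  rw [hdx, hdb]
  apply norm_sq_add_norm_sq_le_of_inner_nonneg_s4
  · simpa only [hy, ha] using hA.inner_smul_nonneg hyA hzw.2 hlam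
  · exact hB.inner_smul_nonneg hxB hzw.1 hlam
  · simpa only [hdx, hdb] using hB.inner_smul_nonneg hxB hxB' hlam

end Hilbert

lemma tendsto_zero_of_add_le_of_nonneg_s4 {D φ : ℕ → ℝ} (hD : ∀ n, 0 ≤ D n) (hφ : ∀ n, 0 ≤ φ n)
    (h : ∀ n, D (n + 1) + φ (n + 1) ≤ φ n) : Tendsto D atTop (𝓝 0) := by
  have hsum : ∀ N, ∑ k ∈ Finset.range N, D (k + 1) ≤ φ 0 := fun N =>
    calc ∑ k ∈ Finset.range N, D (k + 1)
        ≤ ∑ k ∈ Finset.range N, (φ k - φ (k + 1)) :=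
          Finset.sum_le_sum fun k _ => by linarith [h k]
      _ = φ 0 - φ N := Finset.sum_range_sub' φ N
      _ ≤ φ 0 := by linarith [hφ N]
  have hshift := (summable_of_sum_range_le (fun k => hD (k + 1)) hsum).tendsto_atTop_zero
  exact (tendsto_add_atTop_iff_nat 1).mp hshift

lemma tendsto_zero_of_sq_add_sq {α : Type*} {l : Filter α} {r s : α → ℝ}
    (h : Tendsto (fun i => r i ^ 2 + s i ^ 2) l (𝓝 0)) :
    Tendsto r l (𝓝 0) ∧ Tendsto s l (𝓝 0) := by
  have hsqrt := h.sqrt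
  rw [Real.sqrt_zero] at hsqrt
  exact ⟨squeeze_zero_norm (fun i => Real.abs_le_sqrt (le_add_of_nonneg_right (sq_nonneg _)))
    hsqrt, squeeze_zero_norm (fun i => Real.abs_le_sqrt (le_add_of_nonneg_left (sq_nonneg _)))
    hsqrt⟩

theorem dr_item3_general {X : Type*} [NormedAddCommGroup X] [InnerProductSpace ℝ X]
    (A B : Set (X × X))
    (hA : IsMaxMonotone A) (hB : IsMaxMonotone B)
    (lam : ℝ) (hlam : 0 < lam) (y a x b : ℕ → X) (hDR : IsDR A B lam y a x b)
    (hsol : ∃ z u v : X, (z, u) ∈ A ∧ (z, v) ∈ B ∧ u + v = 0) :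
    Tendsto (fun n => ‖x n - x (n - 1)‖) atTop (𝓝 0) ∧
    Tendsto (fun n => ‖b n - b (n - 1)‖) atTop (𝓝 0) := by
  obtain ⟨z, u, w, hzA, hzB, huw⟩ := hsol
  have hzw : (z, w) ∈ Se A B := ⟨hzB, by rwa [neg_eq_of_add_eq_zero_left huw]⟩
  have hdecr : Tendsto (fun n => ‖x n - x (n - 1)‖ ^ 2 + ‖lam • (b n - b (n - 1))‖ ^ 2)
      atTop (𝓝 0) := by
    refine (tendsto_add_atTop_iff_nat 1).mp (tendsto_zero_of_add_le_of_nonneg_s4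
      (φ := fun n => ‖x (n + 1) - z‖ ^ 2 + ‖lam • (b (n + 1) - w)‖ ^ 2)
      (fun _ => by positivity) (fun _ => by positivity) fun n => ?_)
    exact hDR.fejer_s4 hA.1 hB.1 hlam.le hzw (by omega)
  obtain ⟨hx, hb⟩ := tendsto_zero_of_sq_add_sq hdecr
  refine ⟨hx, ?_⟩
  rw [← tendsto_zero_iff_norm_tendsto_zero] at hb ⊢
  rwa [← tendsto_const_smul_iff₀ hlam.ne', smul_zero]

/-- If the monotone inclusion `0 ∈ A(z) + B(z)` has a solution, then in the
Douglas–Rachford method `‖x_n - x_{n-1}‖ → 0` and `‖b_n - b_{n-1}‖ → 0`. -/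
theorem dr_item3 {X : Type*} [NormedAddCommGroup X] [InnerProductSpace ℝ X]
    [CompleteSpace X] (A B : Set (X × X))
    (hA : IsMaxMonotone A) (hB : IsMaxMonotone B)
    (lam : ℝ) (hlam : 0 < lam) (y a x b : ℕ → X) (hDR : IsDR A B lam y a x b)
    (hsol : ∃ z u v : X, (z, u) ∈ A ∧ (z, v) ∈ B ∧ u + v = 0) :
    Tendsto (fun n => ‖x n - x (n - 1)‖) atTop (𝓝 0) ∧
    Tendsto (fun n => ‖b n - b (n - 1)‖) atTop (𝓝 0) :=
  dr_item3_general A B hA hB lam hlam y a x b hDR hsol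
end

section
/- Let A, B be maximal monotone operators on a real Hilbert space X, let λ > 0, and let (y_n, a_n, x_n, b_n) be sequences generated by the Douglas–Rachford method from initial points x₀, b₀ ∈ X. If there exists z ∈ X with 0 ∈ A(z) + B(z), then ‖y_n − y_{n−1}‖ → 0 and ‖a_n − a_{n−1}‖ → 0 as n → ∞. -/
/-!
The governing sequence `w n = x n + λ b n` of the Douglas–Rachford method is generated by a firmly
nonexpansive map: one step takes `w (n-1)` to `w n = y n + λ b (n-1)`, with residual
`w (n-1) - w n = x (n-1) - y n`. Firm nonexpansiveness against the fixed point `z + λ v`, where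
`-v ∈ A z` and `v ∈ B z`, makes `‖w n - (z + λ v)‖²` decrease by at least `‖w (n-1) - w n‖²`,
so these squares are summable and `w` is asymptotically regular. Nonexpansiveness of the
resolvent of `λ A` and of the reflected resolvent of `λ B` then bounds `‖y n - y (n-1)‖` and
`λ ‖a n - a (n-1)‖` by `‖w (n-1) - w (n-2)‖`.
-/

open Filter Topology

section InnerProduct

variable {X : Type*} [NormedAddCommGroup X] [InnerProductSpace ℝ X]

lemma norm_sq_add_norm_sq_le_of_inner_nonneg_s5 {d e : X} (h : 0 ≤ inner ℝ d e) :
    ‖d‖ ^ 2 + ‖e‖ ^ 2 ≤ ‖d + e‖ ^ 2 := by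
  rw [norm_add_sq_real]
  linarith

lemma norm_le_norm_add_of_inner_nonneg {d e : X} (h : 0 ≤ inner ℝ d e) : ‖d‖ ≤ ‖d + e‖ :=
  pow_le_pow_iff_left₀ (norm_nonneg _) (norm_nonneg _) two_ne_zero |>.mp <| by
    nlinarith [norm_sq_add_norm_sq_le_of_inner_nonneg_s5 h, sq_nonneg ‖e‖]

lemma norm_sub_le_norm_add_of_inner_nonneg {d e : X} (h : 0 ≤ inner ℝ d e) :
    ‖d - e‖ ≤ ‖d + e‖ :=
  pow_le_pow_iff_left₀ (norm_nonneg _) (norm_nonneg _) two_ne_zero |>.mp <| by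
    rw [norm_sub_sq_real, norm_add_sq_real]
    linarith

lemma inner_add_add_eq_of_add_eq_sub {p q r s : X} (h : q + p = r - s) :
    inner ℝ (p + s) (q + s) = inner ℝ p q + inner ℝ r s := by
  rw [show r = q + p + s by rw [h]; abel]
  simp only [inner_add_left, inner_add_right, real_inner_comm q s]
  ring

lemma IsMonotoneOp.inner_smul_nonneg_s5 {T : Set (X × X)} (hT : IsMonotoneOp T) {x x' u u' : X}
    (h : (x, u) ∈ T) (h' : (x', u') ∈ T) {lam : ℝ} (hlam : 0 ≤ lam) :
    0 ≤ inner ℝ (x - x') (lam • (u - u')) := by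
  rw [real_inner_smul_right]
  exact mul_nonneg hlam (hT _ h _ h')

end InnerProduct

/-- `y = J_{λA} (x - λ b)` with `b ∈ B x`: one Douglas–Rachford step maps `x + λ b` to `y + λ b`. -/
def IsDRStep {X : Type*} [NormedAddCommGroup X] [InnerProductSpace ℝ X]
    (A B : Set (X × X)) (lam : ℝ) (y a x b : X) : Prop :=
  (y, a) ∈ A ∧ (x, b) ∈ B ∧ lam • a + y = x - lam • b

namespace IsDRStep

variable {X : Type*} [NormedAddCommGroup X] [InnerProductSpace ℝ X] {A B : Set (X × X)}
  {lam : ℝ} {y₁ a₁ x₁ b₁ y₂ a₂ x₂ b₂ : X}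

lemma sub_eq (h₁ : IsDRStep A B lam y₁ a₁ x₁ b₁) (h₂ : IsDRStep A B lam y₂ a₂ x₂ b₂) :
    lam • (a₁ - a₂) + (y₁ - y₂) = (x₁ - x₂) - lam • (b₁ - b₂) := by
  linear_combination (norm := module) h₁.2.2 - h₂.2.2

/-- Firm nonexpansiveness of the Douglas–Rachford map. -/
lemma norm_sq_add_norm_sq_le (hA : IsMonotoneOp A) (hB : IsMonotoneOp B) (hlam : 0 ≤ lam)
    (h₁ : IsDRStep A B lam y₁ a₁ x₁ b₁) (h₂ : IsDRStep A B lam y₂ a₂ x₂ b₂) :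
    ‖(y₁ + lam • b₁) - (y₂ + lam • b₂)‖ ^ 2 + ‖(x₁ - y₁) - (x₂ - y₂)‖ ^ 2 ≤
      ‖(x₁ + lam • b₁) - (x₂ + lam • b₂)‖ ^ 2 := by
  have hstep := h₁.sub_eq h₂
  have hinner : 0 ≤ inner ℝ ((y₁ - y₂) + lam • (b₁ - b₂)) (lam • (a₁ - a₂) + lam • (b₁ - b₂)) := by
    rw [inner_add_add_eq_of_add_eq_sub hstep]
    exact add_nonneg (hA.inner_smul_nonneg_s5 h₁.1 h₂.1 hlam) (hB.inner_smul_nonneg_s5 h₁.2.1 h₂.2.1 hlam)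
  have hres : (x₁ - y₁) - (x₂ - y₂) = lam • (a₁ - a₂) + lam • (b₁ - b₂) := by
    linear_combination (norm := module) -hstep
  calc _ = ‖(y₁ - y₂) + lam • (b₁ - b₂)‖ ^ 2 + ‖lam • (a₁ - a₂) + lam • (b₁ - b₂)‖ ^ 2 := by
        rw [← hres]; congr 3; module
    _ ≤ ‖(y₁ - y₂) + lam • (b₁ - b₂) + (lam • (a₁ - a₂) + lam • (b₁ - b₂))‖ ^ 2 :=
        norm_sq_add_norm_sq_le_of_inner_nonneg_s5 hinner
    _ = _ := by rw [← hres]; congr 2; module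

lemma norm_le (hA : IsMonotoneOp A) (hB : IsMonotoneOp B) (hlam : 0 ≤ lam)
    (h₁ : IsDRStep A B lam y₁ a₁ x₁ b₁) (h₂ : IsDRStep A B lam y₂ a₂ x₂ b₂) :
    ‖y₁ - y₂‖ ≤ ‖(x₁ + lam • b₁) - (x₂ + lam • b₂)‖ ∧
      lam * ‖a₁ - a₂‖ ≤ ‖(x₁ + lam • b₁) - (x₂ + lam • b₂)‖ := by
  have hpq := hA.inner_smul_nonneg_s5 h₁.1 h₂.1 hlam
  have hreflect : ‖lam • (a₁ - a₂) + (y₁ - y₂)‖ ≤ ‖(x₁ + lam • b₁) - (x₂ + lam • b₂)‖ := by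
    rw [h₁.sub_eq h₂,
      show (x₁ + lam • b₁) - (x₂ + lam • b₂) = (x₁ - x₂) + lam • (b₁ - b₂) by module]
    exact norm_sub_le_norm_add_of_inner_nonneg (hB.inner_smul_nonneg_s5 h₁.2.1 h₂.2.1 hlam)
  constructor
  · exact (norm_le_norm_add_of_inner_nonneg hpq).trans (add_comm (y₁ - y₂) _ ▸ hreflect)
  · have h := norm_le_norm_add_of_inner_nonneg (real_inner_comm (y₁ - y₂) _ ▸ hpq)
    rw [norm_smul, Real.norm_of_nonneg hlam] at h
    exact h.trans hreflect

end IsDRStep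

lemma tendsto_zero_of_add_sq_le {f g : ℕ → ℝ} (hf : ∀ n, 0 ≤ f n) (hg : ∀ n, 0 ≤ g n)
    (h : ∀ n, f (n + 1) + g n ^ 2 ≤ f n) : Tendsto g atTop (𝓝 0) := by
  have htelescope : ∀ n, ∑ i ∈ Finset.range n, g i ^ 2 ≤ f 0 - f n := by
    intro n
    induction n with
    | zero => simp
    | succ n ih => rw [Finset.sum_range_succ]; linarith [h n]
  have hsummable : Summable fun n => g n ^ 2 :=
    summable_of_sum_range_le (fun n => sq_nonneg (g n))
      fun n => (htelescope n).trans (by linarith [hf n])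
  simpa [Real.sqrt_sq (hg _)] using hsummable.tendsto_atTop_zero.sqrt

def governingSeq {X : Type*} [NormedAddCommGroup X] [InnerProductSpace ℝ X]
    (lam : ℝ) (x b : ℕ → X) (n : ℕ) : X :=
  x n + lam • b n

namespace IsDR

variable {X : Type*} [NormedAddCommGroup X] [InnerProductSpace ℝ X] {A B : Set (X × X)}
  {lam : ℝ} {y a x b : ℕ → X}

/-- `(x 0, b 0)` need not lie in the graph of `B`, so the steps start at index `2`. -/
lemma isDRStep (hDR : IsDR A B lam y a x b) (n : ℕ) :
    IsDRStep A B lam (y (n + 2)) (a (n + 2)) (x (n + 1)) (b (n + 1)) :=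
  ⟨(hDR (n + 2) (by omega)).1, (hDR (n + 1) (by omega)).2.2.1, (hDR (n + 2) (by omega)).2.1⟩

lemma governingSeq_succ (hDR : IsDR A B lam y a x b) (n : ℕ) :
    governingSeq lam x b (n + 1) = y (n + 1) + lam • b n := by
  rw [governingSeq, add_comm]
  exact (hDR (n + 1) (by omega)).2.2.2

lemma norm_governingSeq_sub_sq_le (hDR : IsDR A B lam y a x b) (hA : IsMonotoneOp A)
    (hB : IsMonotoneOp B) (hlam : 0 ≤ lam) {z v : X} (hzA : (z, -v) ∈ A) (hzB : (z, v) ∈ B)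
    (n : ℕ) :
    ‖governingSeq lam x b (n + 2) - (z + lam • v)‖ ^ 2 +
        ‖governingSeq lam x b (n + 2) - governingSeq lam x b (n + 1)‖ ^ 2 ≤
      ‖governingSeq lam x b (n + 1) - (z + lam • v)‖ ^ 2 := by
  have hfix : IsDRStep A B lam z (-v) z v := ⟨hzA, hzB, by module⟩
  have h := (hDR.isDRStep n).norm_sq_add_norm_sq_le hA hB hlam hfix
  have hres : governingSeq lam x b (n + 2) - governingSeq lam x b (n + 1) =
      -((x (n + 1) - y (n + 2)) - (z - z)) := by
    rw [hDR.governingSeq_succ (n + 1), governingSeq]; abel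
  rw [hres, hDR.governingSeq_succ (n + 1), norm_neg]
  exact h

lemma tendsto_norm_governingSeq_sub (hDR : IsDR A B lam y a x b) (hA : IsMonotoneOp A)
    (hB : IsMonotoneOp B) (hlam : 0 ≤ lam) {z v : X} (hzA : (z, -v) ∈ A) (hzB : (z, v) ∈ B) :
    Tendsto (fun n => ‖governingSeq lam x b (n + 2) - governingSeq lam x b (n + 1)‖) atTop
      (𝓝 0) :=
  tendsto_zero_of_add_sq_le (f := fun n => ‖governingSeq lam x b (n + 1) - (z + lam • v)‖ ^ 2)
    (fun _ => sq_nonneg _) (fun _ => norm_nonneg _)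
    (hDR.norm_governingSeq_sub_sq_le hA hB hlam hzA hzB)

lemma norm_sub_le (hDR : IsDR A B lam y a x b) (hA : IsMonotoneOp A) (hB : IsMonotoneOp B)
    (hlam : 0 ≤ lam) (n : ℕ) :
    ‖y (n + 3) - y (n + 2)‖ ≤ ‖governingSeq lam x b (n + 2) - governingSeq lam x b (n + 1)‖ ∧
      lam * ‖a (n + 3) - a (n + 2)‖ ≤
        ‖governingSeq lam x b (n + 2) - governingSeq lam x b (n + 1)‖ :=
  (hDR.isDRStep (n + 1)).norm_le hA hB hlam (hDR.isDRStep n)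

end IsDR

theorem dr_item4_general {X : Type*} [NormedAddCommGroup X] [InnerProductSpace ℝ X]
    (A B : Set (X × X))
    (hA : IsMaxMonotone A) (hB : IsMaxMonotone B)
    (lam : ℝ) (hlam : 0 < lam) (y a x b : ℕ → X) (hDR : IsDR A B lam y a x b)
    (hsol : ∃ z u v : X, (z, u) ∈ A ∧ (z, v) ∈ B ∧ u + v = 0) :
    Tendsto (fun n => ‖y n - y (n - 1)‖) atTop (𝓝 0) ∧
    Tendsto (fun n => ‖a n - a (n - 1)‖) atTop (𝓝 0) := by
  obtain ⟨z, u, v, hzA, hzB, huv⟩ := hsol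
  rw [eq_neg_of_add_eq_zero_left huv] at hzA
  have hreg := hDR.tendsto_norm_governingSeq_sub hA.1 hB.1 hlam.le hzA hzB
  have hbound := hDR.norm_sub_le hA.1 hB.1 hlam.le
  refine ⟨(tendsto_add_atTop_iff_nat 3).mp ?_, (tendsto_add_atTop_iff_nat 3).mp ?_⟩
  · exact squeeze_zero (fun _ => norm_nonneg _) (fun n => (hbound n).1) hreg
  · refine squeeze_zero (fun _ => norm_nonneg _) (fun n => ?_) (by simpa using hreg.div_const lam)
    exact (le_div_iff₀' hlam).mpr (hbound n).2

/-- If the monotone inclusion `0 ∈ A(z) + B(z)` has a solution, then in the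
Douglas–Rachford method `‖y_n - y_{n-1}‖ → 0` and `‖a_n - a_{n-1}‖ → 0`. -/
theorem dr_item4 {X : Type*} [NormedAddCommGroup X] [InnerProductSpace ℝ X]
    [CompleteSpace X] (A B : Set (X × X))
    (hA : IsMaxMonotone A) (hB : IsMaxMonotone B)
    (lam : ℝ) (hlam : 0 < lam) (y a x b : ℕ → X) (hDR : IsDR A B lam y a x b)
    (hsol : ∃ z u v : X, (z, u) ∈ A ∧ (z, v) ∈ B ∧ u + v = 0) :
    Tendsto (fun n => ‖y n - y (n - 1)‖) atTop (𝓝 0) ∧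
    Tendsto (fun n => ‖a n - a (n - 1)‖) atTop (𝓝 0) :=
  dr_item4_general A B hA hB lam hlam y a x b hDR hsol
end

section
/- Let A, B be maximal monotone operators on a real Hilbert space X and let (y_n, a_n, x_n, b_n) be sequences generated by the Douglas–Rachford method with stepsize λ = 1 from initial points x₀, b₀ ∈ X. Then for every p = (z, w) ∈ S_e(A,B) and every n ≥ 1, with p_n = (x_n, b_n) ∈ X × X, one has ‖p − p_{n−1}‖² ≥ ‖p − p_n‖² + ‖a_n + b_{n−1}‖², where X × X carries the Hilbert product norm ‖(u,v)‖² = ‖u‖² + ‖v‖². -/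
open Filter Topology

/-! Monotonicity of `A` at `(y_n, a_n), (z, -w)` and of `B` at `(x_n, b_n), (z, w)` gives two
nonnegative inner products, and a Hilbert-space identity shows that twice their sum is exactly
the Fejér gap `‖p - p_{n-1}‖² - ‖p - p_n‖² - ‖a_n + b_{n-1}‖²`. -/

open RealInnerProductSpace

section DouglasRachford

variable {X : Type*} [NormedAddCommGroup X] [InnerProductSpace ℝ X]

lemma IsMonotoneOp.inner_nonneg {T : Set (X × X)} (hT : IsMonotoneOp T) {x u x' u' : X}
    (h : (x, u) ∈ T) (h' : (x', u') ∈ T) : 0 ≤ ⟪x - x', u - u'⟫ :=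
  hT _ h _ h'

-- With `x = x_{n-1}` and `β = b_{n-1}`, the points `x - β - a` and `x - a - b` are `y_n` and `x_n`.
lemma dr_gap_eq_inner (x β a b z w : X) :
    ‖z - x‖ ^ 2 + ‖w - β‖ ^ 2 - ‖z - (x - a - b)‖ ^ 2 - ‖w - b‖ ^ 2 - ‖a + β‖ ^ 2 =
      2 * ⟪(x - β - a) - z, a + w⟫ + 2 * ⟪(x - a - b) - z, b - w⟫ := by
  simp only [← real_inner_self_eq_norm_sq, inner_sub_left, inner_sub_right, inner_add_left,
    inner_add_right, real_inner_comm]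
  ring

lemma IsDR.step_eqs {A B : Set (X × X)} {y a x b : ℕ → X} (hDR : IsDR A B 1 y a x b) {n : ℕ}
    (hn : 1 ≤ n) :
    y n = x (n - 1) - b (n - 1) - a n ∧ x n = x (n - 1) - a n - b n := by
  obtain ⟨-, hy, -, hx⟩ := hDR n hn
  simp only [one_smul] at hy hx
  have hy' := eq_sub_of_add_eq' hy
  refine ⟨hy', ?_⟩
  rw [eq_sub_of_add_eq' hx, hy']
  abel

end DouglasRachford

theorem dr_fejer_step_general {X : Type*} [NormedAddCommGroup X] [InnerProductSpace ℝ X]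
    (A B : Set (X × X))
    (hA : IsMaxMonotone A) (hB : IsMaxMonotone B)
    (y a x b : ℕ → X) (hDR : IsDR A B 1 y a x b)
    (z w : X) (hp : (z, w) ∈ Se A B) (n : ℕ) (hn : 1 ≤ n) :
    ‖z - x n‖ ^ 2 + ‖w - b n‖ ^ 2 + ‖a n + b (n - 1)‖ ^ 2 ≤
      ‖z - x (n - 1)‖ ^ 2 + ‖w - b (n - 1)‖ ^ 2 := by
  obtain ⟨hAy, -, hBx, -⟩ := hDR n hn
  obtain ⟨hy, hx⟩ := hDR.step_eqs hn
  have monoA : 0 ≤ ⟪y n - z, a n + w⟫ := by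
    simpa only [sub_neg_eq_add] using hA.1.inner_nonneg hAy hp.2
  have monoB : 0 ≤ ⟪x n - z, b n - w⟫ := hB.1.inner_nonneg hBx hp.1
  have gap := dr_gap_eq_inner (x (n - 1)) (b (n - 1)) (a n) (b n) z w
  rw [← hy, ← hx] at gap
  linarith

/-- Fejér inequality for `p_n = (x_n, b_n)` w.r.t. any `p = (z,w) ∈ S_e(A,B)`, stepsize 1,
where `X × X` carries the Hilbert product norm `‖(u,v)‖² = ‖u‖² + ‖v‖²`. -/
theorem dr_fejer_step {X : Type*} [NormedAddCommGroup X] [InnerProductSpace ℝ X]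
    [CompleteSpace X] (A B : Set (X × X))
    (hA : IsMaxMonotone A) (hB : IsMaxMonotone B)
    (y a x b : ℕ → X) (hDR : IsDR A B 1 y a x b)
    (z w : X) (hp : (z, w) ∈ Se A B) (n : ℕ) (hn : 1 ≤ n) :
    ‖z - x n‖ ^ 2 + ‖w - b n‖ ^ 2 + ‖a n + b (n - 1)‖ ^ 2 ≤
      ‖z - x (n - 1)‖ ^ 2 + ‖w - b (n - 1)‖ ^ 2 :=
  dr_fejer_step_general A B hA hB y a x b hDR z w hp n hn
end

section
/- Let A, B be maximal monotone operators on a real Hilbert space X and let (y_n, a_n, x_n, b_n) be sequences generated by the Douglas–Rachford method with stepsize λ = 1 from initial points x₀, b₀ ∈ X. Then for every p = (z, w) ∈ S_e(A,B) and every n ≥ 1, with p_n = (x_n, b_n), one has ‖p − p₀‖² ≥ ‖p − p_n‖² + Σ_{k=1}^{n} ‖a_k + b_{k−1}‖², where X × X carries the Hilbert product norm ‖(u,v)‖² = ‖u‖² + ‖v‖². -/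
open Filter Topology

/-!
In the variables `u = x_{k-1} - z`, `v = b_{k-1} - w`, `α = a_k + w`, `β = b_k - w`, one
Douglas–Rachford step gives `y_k - z = u - v - α`, `x_k - z = u - α - β` and
`a_k + b_{k-1} = α + v`, and expanding squares yields the exact identity
`‖p - p_{k-1}‖² = ‖p - p_k‖² + ‖a_k + b_{k-1}‖² + 2⟪y_k - z, a_k + w⟫ + 2⟪x_k - z, b_k - w⟫`.
Both inner products are nonnegative by monotonicity, since `(z, -w) ∈ A` and `(z, w) ∈ B`,
so each step loses at least `‖a_k + b_{k-1}‖²`; summing the steps gives the claim.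
-/

theorem add_sum_Icc_le_of_succ_le {d c : ℕ → ℝ} (h : ∀ k, d (k + 1) + c (k + 1) ≤ d k) (n : ℕ) :
    d n + ∑ k ∈ Finset.Icc 1 n, c k ≤ d 0 := by
  induction n with
  | zero => simp
  | succ n ih =>
    rw [Finset.sum_Icc_succ_top (by omega)]
    linarith [h n]

section DouglasRachford

variable {X : Type*} [NormedAddCommGroup X] [InnerProductSpace ℝ X]

theorem dr_step_norm_sq_eq {z w x₀ b₀ a y x b : X}
    (ha : a + y = x₀ - b₀) (hb : b + x = y + b₀) :
    ‖z - x₀‖ ^ 2 + ‖w - b₀‖ ^ 2 =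
      ‖z - x‖ ^ 2 + ‖w - b‖ ^ 2 + ‖a + b₀‖ ^ 2
        + 2 * inner ℝ (y - z) (a - -w) + 2 * inner ℝ (x - z) (b - w) := by
  obtain rfl : y = x₀ - b₀ - a := eq_sub_of_add_eq' ha
  obtain rfl : x = x₀ - b₀ - a + b₀ - b := eq_sub_of_add_eq' hb
  simp only [← real_inner_self_eq_norm_sq, inner_sub_left, inner_sub_right, inner_add_left,
    inner_add_right, inner_neg_right, real_inner_comm]
  ring

theorem IsDR.fejer_step {A B : Set (X × X)} {y a x b : ℕ → X}
    (hA : IsMonotoneOp A) (hB : IsMonotoneOp B) (hDR : IsDR A B 1 y a x b)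
    {z w : X} (hp : (z, w) ∈ Se A B) (k : ℕ) :
    ‖z - x (k + 1)‖ ^ 2 + ‖w - b (k + 1)‖ ^ 2 + ‖a (k + 1) + b k‖ ^ 2 ≤
      ‖z - x k‖ ^ 2 + ‖w - b k‖ ^ 2 := by
  obtain ⟨hyA, ha, hxB, hb⟩ := hDR (k + 1) k.succ_pos
  simp only [one_smul, Nat.add_sub_cancel] at ha hb
  rw [dr_step_norm_sq_eq ha hb]
  linarith [hA _ hyA _ hp.2, hB _ hxB _ hp.1]

end DouglasRachford

theorem dr_fejer_sum_general {X : Type*} [NormedAddCommGroup X] [InnerProductSpace ℝ X]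
    (A B : Set (X × X))
    (hA : IsMaxMonotone A) (hB : IsMaxMonotone B)
    (y a x b : ℕ → X) (hDR : IsDR A B 1 y a x b)
    (z w : X) (hp : (z, w) ∈ Se A B) (n : ℕ) :
    ‖z - x n‖ ^ 2 + ‖w - b n‖ ^ 2 + ∑ k ∈ Finset.Icc 1 n, ‖a k + b (k - 1)‖ ^ 2 ≤
      ‖z - x 0‖ ^ 2 + ‖w - b 0‖ ^ 2 := by
  exact add_sum_Icc_le_of_succ_le (d := fun k => ‖z - x k‖ ^ 2 + ‖w - b k‖ ^ 2)
    (c := fun k => ‖a k + b (k - 1)‖ ^ 2) (hDR.fejer_step hA.1 hB.1 hp) n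

/-- Summed Fejér inequality for `p_n = (x_n, b_n)` w.r.t. any `p = (z,w) ∈ S_e(A,B)`,
stepsize 1, with the Hilbert product norm `‖(u,v)‖² = ‖u‖² + ‖v‖²` on `X × X`. -/
theorem dr_fejer_sum {X : Type*} [NormedAddCommGroup X] [InnerProductSpace ℝ X]
    [CompleteSpace X] (A B : Set (X × X))
    (hA : IsMaxMonotone A) (hB : IsMaxMonotone B)
    (y a x b : ℕ → X) (hDR : IsDR A B 1 y a x b)
    (z w : X) (hp : (z, w) ∈ Se A B) (n : ℕ) (hn : 1 ≤ n) :
    ‖z - x n‖ ^ 2 + ‖w - b n‖ ^ 2 + ∑ k ∈ Finset.Icc 1 n, ‖a k + b (k - 1)‖ ^ 2 ≤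
      ‖z - x 0‖ ^ 2 + ‖w - b 0‖ ^ 2 :=
  dr_fejer_sum_general A B hA hB y a x b hDR z w hp n
end

section
/- Let A, B be maximal monotone operators on a real Hilbert space X and let (y_n, a_n, x_n, b_n) be sequences generated by the Douglas–Rachford method with stepsize λ = 1 from initial points x₀, b₀ ∈ X. Then for every n ≥ 2, ‖a_n − a_{n−1}‖² + ‖y_n − y_{n−1}‖² ≤ ‖x_{n−1} − y_{n−1} − (a_{n−1} + b_{n−1})‖². -/
open Filter Topology

/-! Writing `u = a_n - a_{n-1}` and `v = y_n - y_{n-1}`, the first Douglas–Rachford update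
`a_n + y_n = x_{n-1} - b_{n-1}` shows that the right-hand side is `‖u + v‖²`, and
`‖u + v‖² = ‖u‖² + ‖v‖² + 2⟪u, v⟫ ≥ ‖u‖² + ‖v‖²` because `⟪v, u⟫ ≥ 0` by monotonicity of `A`. -/

theorem norm_sq_add_norm_sq_le_norm_add_sq {X : Type*} [NormedAddCommGroup X]
    [InnerProductSpace ℝ X] {u v : X} (huv : 0 ≤ inner ℝ u v) :
    ‖u‖ ^ 2 + ‖v‖ ^ 2 ≤ ‖u + v‖ ^ 2 := by
  rw [norm_add_sq_real]
  linarith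

theorem IsMonotoneOp.norm_sq_add_norm_sq_le {X : Type*} [NormedAddCommGroup X]
    [InnerProductSpace ℝ X] {T : Set (X × X)} (hT : IsMonotoneOp T) {p q : X × X}
    (hp : p ∈ T) (hq : q ∈ T) :
    ‖p.2 - q.2‖ ^ 2 + ‖p.1 - q.1‖ ^ 2 ≤ ‖(p.2 + p.1) - (q.2 + q.1)‖ ^ 2 := by
  have hsplit : (p.2 + p.1) - (q.2 + q.1) = (p.2 - q.2) + (p.1 - q.1) := by abel
  rw [hsplit]
  refine norm_sq_add_norm_sq_le_norm_add_sq ?_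
  rw [real_inner_comm]
  exact hT p hp q hq

theorem IsDR.sub_eq_add_sub_add {X : Type*} [NormedAddCommGroup X] [InnerProductSpace ℝ X]
    {A B : Set (X × X)} {y a x b : ℕ → X} (hDR : IsDR A B 1 y a x b) {n : ℕ} (hn : 1 ≤ n) :
    x (n - 1) - y (n - 1) - (a (n - 1) + b (n - 1)) = (a n + y n) - (a (n - 1) + y (n - 1)) := by
  obtain ⟨-, hstep, -, -⟩ := hDR n hn
  simp only [one_smul] at hstep
  rw [hstep]
  abel

theorem dr_item4_ineq_general {X : Type*} [NormedAddCommGroup X] [InnerProductSpace ℝ X]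
    (A B : Set (X × X))
    (hA : IsMaxMonotone A)
    (y a x b : ℕ → X) (hDR : IsDR A B 1 y a x b) (n : ℕ) (hn : 2 ≤ n) :
    ‖a n - a (n - 1)‖ ^ 2 + ‖y n - y (n - 1)‖ ^ 2 ≤
      ‖x (n - 1) - y (n - 1) - (a (n - 1) + b (n - 1))‖ ^ 2 := by
  rw [hDR.sub_eq_add_sub_add (by omega)]
  exact hA.1.norm_sq_add_norm_sq_le (hDR n (by omega)).1 (hDR (n - 1) (by omega)).1

/-- For all `n ≥ 2`,
`‖a_n - a_{n-1}‖² + ‖y_n - y_{n-1}‖² ≤ ‖x_{n-1} - y_{n-1} - (a_{n-1} + b_{n-1})‖²`. -/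
theorem dr_item4_ineq {X : Type*} [NormedAddCommGroup X] [InnerProductSpace ℝ X]
    [CompleteSpace X] (A B : Set (X × X))
    (hA : IsMaxMonotone A) (hB : IsMaxMonotone B)
    (y a x b : ℕ → X) (hDR : IsDR A B 1 y a x b) (n : ℕ) (hn : 2 ≤ n) :
    ‖a n - a (n - 1)‖ ^ 2 + ‖y n - y (n - 1)‖ ^ 2 ≤
      ‖x (n - 1) - y (n - 1) - (a (n - 1) + b (n - 1))‖ ^ 2 :=
  dr_item4_ineq_general A B hA y a x b hDR n hn
end

section
/- Let A, B be maximal monotone operators on a real Hilbert space X and let (y_n, a_n, x_n, b_n) be sequences generated by the Douglas–Rachford method with stepsize λ = 1 from initial points x₀, b₀ ∈ X. Then for every p = (z, w) ∈ S_e(A,B) and every n ≥ 1, with p_n = (x_n, b_n) ∈ X × X equipped with the product inner product, one has ⟨p − p_n, p_n − p_{n−1}⟩ ≥ ⟨x_n − y_n, a_n + b_n⟩. -/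
open Filter Topology

section

variable {X : Type*} [NormedAddCommGroup X] [InnerProductSpace ℝ X]

/-- The two sides differ by exactly `⟪y - z, a + w⟫ + ⟪x - z, b - w⟫`, the sum of the
monotonicity gaps of `A` at `(y, a), (z, -w)` and of `B` at `(x, b), (z, w)`. -/
theorem inner_sub_add_le_of_mem_Se {A B : Set (X × X)} (hA : IsMonotoneOp A)
    (hB : IsMonotoneOp B) {y a x b z w : X} (hya : (y, a) ∈ A) (hxb : (x, b) ∈ B)
    (hp : (z, w) ∈ Se A B) :
    (inner ℝ (x - y) (a + b) : ℝ) ≤ inner ℝ (z - x) (-(a + b)) + inner ℝ (w - b) (y - x) := by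
  have hAmono : (0 : ℝ) ≤ inner ℝ (y - z) (a - -w) := hA _ hya _ hp.2
  have hBmono : (0 : ℝ) ≤ inner ℝ (x - z) (b - w) := hB _ hxb _ hp.1
  simp only [inner_sub_left, inner_sub_right, inner_add_right,
    inner_neg_right] at hAmono hBmono ⊢
  linarith [real_inner_comm w y, real_inner_comm w x, real_inner_comm b y,
    real_inner_comm b x]

namespace IsDR

variable {A B : Set (X × X)} {lam : ℝ} {y a x b : ℕ → X} {n : ℕ}

theorem x_sub_x_pred (h : IsDR A B lam y a x b) (hn : 1 ≤ n) :
    x n - x (n - 1) = -(lam • (a n + b n)) := by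
  obtain ⟨-, ha, -, hb⟩ := h n hn
  rw [eq_sub_of_add_eq' hb, sub_eq_iff_eq_add.mp ha.symm, smul_add]
  abel

theorem smul_b_sub_b_pred (h : IsDR A B lam y a x b) (hn : 1 ≤ n) :
    lam • (b n - b (n - 1)) = y n - x n := by
  obtain ⟨-, -, -, hb⟩ := h n hn
  rw [smul_sub, sub_eq_sub_iff_add_eq_add, hb]

end IsDR

end

theorem dr_inner_ineq_general {X : Type*} [NormedAddCommGroup X] [InnerProductSpace ℝ X]
    (A B : Set (X × X))
    (hA : IsMaxMonotone A) (hB : IsMaxMonotone B)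
    (y a x b : ℕ → X) (hDR : IsDR A B 1 y a x b)
    (z w : X) (hp : (z, w) ∈ Se A B) (n : ℕ) (hn : 1 ≤ n) :
    (inner ℝ (x n - y n) (a n + b n) : ℝ) ≤
      (inner ℝ (z - x n) (x n - x (n - 1)) : ℝ) +
        (inner ℝ (w - b n) (b n - b (n - 1)) : ℝ) := by
  obtain ⟨hya, -, hxb, -⟩ := hDR n hn
  have hx := hDR.x_sub_x_pred hn
  have hb := hDR.smul_b_sub_b_pred hn
  rw [one_smul] at hx hb
  rw [hx, hb]
  exact inner_sub_add_le_of_mem_Se hA.1 hB.1 hya hxb hp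

/-- For every `p = (z,w) ∈ S_e(A,B)` and `n ≥ 1`, with `p_n = (x_n, b_n)` in the product
Hilbert space `X × X` (so `⟨(u,v),(u',v')⟩ = ⟨u,u'⟩ + ⟨v,v'⟩`), one has
`⟨p - p_n, p_n - p_{n-1}⟩ ≥ ⟨x_n - y_n, a_n + b_n⟩`. -/
theorem dr_inner_ineq {X : Type*} [NormedAddCommGroup X] [InnerProductSpace ℝ X]
    [CompleteSpace X] (A B : Set (X × X))
    (hA : IsMaxMonotone A) (hB : IsMaxMonotone B)
    (y a x b : ℕ → X) (hDR : IsDR A B 1 y a x b)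
    (z w : X) (hp : (z, w) ∈ Se A B) (n : ℕ) (hn : 1 ≤ n) :
    (inner ℝ (x n - y n) (a n + b n) : ℝ) ≤
      (inner ℝ (z - x n) (x n - x (n - 1)) : ℝ) +
        (inner ℝ (w - b n) (b n - b (n - 1)) : ℝ) :=
  dr_inner_ineq_general A B hA hB y a x b hDR z w hp n hn
end

section
/- Let A, B be maximal monotone operators on a real Hilbert space X. Then the extended solution set S_e(A,B) is a closed and convex subset of the product Hilbert space X × X. -/
open Filter Topology

/-! A maximal monotone graph `T` consists exactly of the points `p` with
`0 ≤ ⟪p.1 - q.1, p.2 - q.2⟫` for all `q ∈ T`, so it is closed. For two points of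
`S_e(A,B)`, monotonicity of `B` and of `A` give `⟪z - z', w - w'⟫` both signs, so it vanishes.
Since `P ↦ ⟪P.1, P.2⟫` is quadratic, at a convex combination of two points of `T` with vanishing
pairing, the pairing with any `x ∈ T` is the same convex combination of their (nonnegative)
pairings with `x`; hence such segments stay in `T`. -/

section MaximalMonotone

variable {X : Type*} [NormedAddCommGroup X] [InnerProductSpace ℝ X] {T : Set (X × X)}

theorem IsMaxMonotone.mem_of_forall_inner_nonneg_s17 (hT : IsMaxMonotone T) {p : X × X}
    (hp : ∀ q ∈ T, (0 : ℝ) ≤ inner ℝ (p.1 - q.1) (p.2 - q.2)) : p ∈ T := by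
  have hmono : IsMonotoneOp (insert p T) := by
    rintro a (rfl | ha) b (rfl | hb)
    · simp
    · exact hp b hb
    · rw [← neg_sub b.1, ← neg_sub b.2, inner_neg_neg]
      exact hp a ha
    · exact hT.1 a ha b hb
  rw [← hT.2 _ hmono (Set.subset_insert p T)]
  exact Set.mem_insert p T

theorem IsMaxMonotone.isClosed (hT : IsMaxMonotone T) : IsClosed T := by
  refine isClosed_of_closure_subset fun p hp => hT.mem_of_forall_inner_nonneg_s17 fun q hq => ?_
  have hclosed : IsClosed {p : X × X | (0 : ℝ) ≤ inner ℝ (p.1 - q.1) (p.2 - q.2)} :=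
    isClosed_le continuous_const (by fun_prop)
  exact closure_minimal (fun p' hp' => hT.1 p' hp' q hq) hclosed hp

theorem inner_fst_snd_smul_add_smul (P Q : X × X) {t s : ℝ} (hts : t + s = 1) :
    inner ℝ (t • P + s • Q).1 (t • P + s • Q).2
      = t * inner ℝ P.1 P.2 + s * inner ℝ Q.1 Q.2 - t * s * inner ℝ (P - Q).1 (P - Q).2 := by
  obtain rfl : s = 1 - t := by linarith
  simp only [Prod.fst_add, Prod.snd_add, Prod.smul_fst, Prod.smul_snd, Prod.fst_sub,
    Prod.snd_sub, inner_add_left, inner_add_right, inner_sub_left, inner_sub_right,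
    real_inner_smul_left, real_inner_smul_right]
  ring

theorem IsMaxMonotone.smul_add_smul_mem (hT : IsMaxMonotone T) {p q : X × X}
    (hp : p ∈ T) (hq : q ∈ T) (hpq : inner ℝ (p.1 - q.1) (p.2 - q.2) = (0 : ℝ))
    {t s : ℝ} (ht : 0 ≤ t) (hs : 0 ≤ s) (hts : t + s = 1) : t • p + s • q ∈ T := by
  refine hT.mem_of_forall_inner_nonneg_s17 fun x hx => ?_
  have hcomb : t • p + s • q - x = t • (p - x) + s • (q - x) :=
    calc t • p + s • q - x = t • p + s • q - (t + s) • x := by rw [hts, one_smul]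
      _ = t • (p - x) + s • (q - x) := by module
  have key := inner_fst_snd_smul_add_smul (p - x) (q - x) hts
  rw [← hcomb, sub_sub_sub_cancel_right] at key
  simp only [Prod.fst_sub, Prod.snd_sub] at key hpq
  rw [key, hpq, mul_zero, sub_zero]
  exact add_nonneg (mul_nonneg ht (hT.1 p hp x hx)) (mul_nonneg hs (hT.1 q hq x hx))

end MaximalMonotone

section ExtendedSolutionSet

variable {X : Type*} [NormedAddCommGroup X] [InnerProductSpace ℝ X] {A B : Set (X × X)}

theorem isClosed_Se (hA : IsMaxMonotone A) (hB : IsMaxMonotone B) : IsClosed (Se A B) :=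
  hB.isClosed.inter (hA.isClosed.preimage (by fun_prop))

theorem inner_sub_eq_zero_of_mem_Se (hA : IsMonotoneOp A) (hB : IsMonotoneOp B)
    {p q : X × X} (hp : p ∈ Se A B) (hq : q ∈ Se A B) :
    inner ℝ (p.1 - q.1) (p.2 - q.2) = (0 : ℝ) := by
  have hA' := hA _ hp.2 _ hq.2
  rw [← neg_sub', inner_neg_right] at hA'
  exact le_antisymm (neg_nonneg.mp hA') (hB _ hp.1 _ hq.1)

theorem convex_Se (hA : IsMaxMonotone A) (hB : IsMaxMonotone B) : Convex ℝ (Se A B) := by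
  intro p hp q hq t s ht hs hts
  have hpq := inner_sub_eq_zero_of_mem_Se hA.1 hB.1 hp hq
  refine ⟨hB.smul_add_smul_mem hp.1 hq.1 hpq ht hs hts, ?_⟩
  have hpq' : inner ℝ (p.1 - q.1) (-p.2 - -q.2) = (0 : ℝ) := by
    rw [← neg_sub', inner_neg_right, hpq, neg_zero]
  have hcomb : ((t • p + s • q).1, -(t • p + s • q).2)
      = t • (p.1, -p.2) + s • (q.1, -q.2) := by
    ext <;> simp [add_comm]
  rw [hcomb]
  exact hA.smul_add_smul_mem hp.2 hq.2 hpq' ht hs hts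

end ExtendedSolutionSet

theorem Se_isClosed_convex_general {X : Type*} [NormedAddCommGroup X] [InnerProductSpace ℝ X]
    (A B : Set (X × X))
    (hA : IsMaxMonotone A) (hB : IsMaxMonotone B) :
    IsClosed ((WithLp.equiv 2 (X × X)).symm '' Se A B) ∧
    Convex ℝ ((WithLp.equiv 2 (X × X)).symm '' Se A B) := by
  let e := WithLp.prodContinuousLinearEquiv 2 ℝ X X
  have himage : (WithLp.equiv 2 (X × X)).symm '' Se A B = e ⁻¹' Se A B := by
    rw [Equiv.image_eq_preimage_symm, Equiv.symm_symm]
    rfl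
  rw [himage]
  exact ⟨(isClosed_Se hA hB).preimage e.continuous,
    (convex_Se hA hB).linear_preimage (e : WithLp 2 (X × X) →ₗ[ℝ] X × X)⟩

/-- For maximal monotone `A`, `B`, the extended solution set `S_e(A,B)` is a closed and
convex subset of the product Hilbert space `X × X` (realized as `WithLp 2 (X × X)`). -/
theorem Se_isClosed_convex {X : Type*} [NormedAddCommGroup X] [InnerProductSpace ℝ X]
    [CompleteSpace X] (A B : Set (X × X))
    (hA : IsMaxMonotone A) (hB : IsMaxMonotone B) :
    IsClosed ((WithLp.equiv 2 (X × X)).symm '' Se A B) ∧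
    Convex ℝ ((WithLp.equiv 2 (X × X)).symm '' Se A B) :=
  Se_isClosed_convex_general A B hA hB
end
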